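/- arXiv:1203.3417 — 3 statements merged into one kernel-verified Lean document; each statement's English description precedes it below -/
import Mathlib

section
/- Let μ and ν be probability measures on ℝ. For every s ∈ ℝ, one has |∫ e^{−isx} dμ(x) − ∫ e^{−isx} dν(x)| ≤ 2|s| · ℓ_{1,|s|}(μ, ν). -/
open MeasureTheory

/-- The `k`-Kantorovich distance between two probability measures on `ℝ`:
the supremum of `|∫ f dμ - ∫ f dν|` over bounded, twice continuously differentiable
`f : ℝ → ℝ` with `‖f'‖_∞ ≤ 1` and `‖f''‖_∞ ≤ k`. -/
noncomputable def kantorovich2 (k : ℝ) (μ ν : Measure ℝ) : ENNReal :=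
  ⨆ (f : ℝ → ℝ) (_ : ContDiff ℝ 2 f) (_ : ∃ C, ∀ x, |f x| ≤ C)
    (_ : ∀ x, |deriv f x| ≤ 1) (_ : ∀ x, |deriv (deriv f) x| ≤ k),
    ENNReal.ofReal |(∫ x, f x ∂μ) - ∫ x, f x ∂ν|

lemma le_kantorovich2 {k : ℝ} (μ ν : Measure ℝ) {f : ℝ → ℝ} (hf : ContDiff ℝ 2 f)
    (hf_bdd : ∃ C, ∀ x, |f x| ≤ C) (hf' : ∀ x, |deriv f x| ≤ 1)
    (hf'' : ∀ x, |deriv (deriv f) x| ≤ k) :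
    ENNReal.ofReal |(∫ x, f x ∂μ) - ∫ x, f x ∂ν| ≤ kantorovich2 k μ ν :=
  le_iSup_of_le f <| le_iSup_of_le hf <| le_iSup_of_le hf_bdd <| le_iSup_of_le hf' <|
    le_iSup_of_le hf'' le_rfl

/-- Rescaling `x ↦ φ (s x) / s` keeps `‖φ'‖_∞ ≤ 1` and turns `‖φ''‖_∞ ≤ 1` into `≤ |s|`. -/
lemma abs_integral_comp_mul_left_sub_le {φ : ℝ → ℝ} (hφ : ContDiff ℝ 2 φ)
    (hφ_bdd : ∃ C, ∀ x, |φ x| ≤ C) (hφ' : ∀ x, |deriv φ x| ≤ 1)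
    (hφ'' : ∀ x, |deriv (deriv φ) x| ≤ 1) (μ ν : Measure ℝ) {s : ℝ} (hs : s ≠ 0) :
    ENNReal.ofReal |(∫ x, φ (s * x) ∂μ) - ∫ x, φ (s * x) ∂ν| ≤
      ENNReal.ofReal |s| * kantorovich2 |s| μ ν := by
  set f : ℝ → ℝ := fun x ↦ φ (s * x) / s
  have hf' : deriv f = fun x ↦ deriv φ (s * x) := by
    funext x
    simp only [f, deriv_div_const, deriv_comp_mul_left, smul_eq_mul, mul_div_cancel_left₀ _ hs]
  have hf'' : deriv (deriv f) = fun x ↦ s * deriv (deriv φ) (s * x) := by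
    funext x
    simp only [hf', deriv_comp_mul_left, smul_eq_mul]
  have hf : ContDiff ℝ 2 f := (hφ.comp (contDiff_const.mul contDiff_id)).div_const s
  have hf_bdd : ∃ C, ∀ x, |f x| ≤ C := by
    obtain ⟨C, hC⟩ := hφ_bdd
    exact ⟨C / |s|, fun x ↦ by simp only [f, abs_div]; gcongr; exact hC _⟩
  have hf''_le (x : ℝ) : |deriv (deriv f) x| ≤ |s| := by
    simpa only [hf'', abs_mul] using mul_le_of_le_one_right (abs_nonneg s) (hφ'' _)
  have hint : (∫ x, φ (s * x) ∂μ) - ∫ x, φ (s * x) ∂ν = s * ((∫ x, f x ∂μ) - ∫ x, f x ∂ν) := by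
    simp only [f, integral_div, mul_sub, mul_div_cancel₀ _ hs]
  rw [hint, abs_mul, ENNReal.ofReal_mul (abs_nonneg s)]
  gcongr
  exact le_kantorovich2 μ ν hf hf_bdd (by simpa only [hf'] using fun x ↦ hφ' _) hf''_le

lemma integrable_exp_neg_I_mul (s : ℝ) (μ : Measure ℝ) [IsFiniteMeasure μ] :
    Integrable (fun x : ℝ ↦ Complex.exp (-Complex.I * s * x)) μ := by
  refine (integrable_const (1 : ℝ)).mono' (by fun_prop) (Filter.Eventually.of_forall fun x ↦ ?_)
  simp [Complex.norm_exp, Complex.mul_re]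

lemma re_integral_exp_neg_I_mul (s : ℝ) (μ : Measure ℝ) [IsFiniteMeasure μ] :
    (∫ x : ℝ, Complex.exp (-Complex.I * s * x) ∂μ).re = ∫ x, Real.cos (s * x) ∂μ := by
  refine (integral_re (integrable_exp_neg_I_mul s μ)).symm.trans ?_
  congr 1 with x
  simp [Complex.exp_re, Complex.mul_re, Complex.mul_im]

lemma im_integral_exp_neg_I_mul (s : ℝ) (μ : Measure ℝ) [IsFiniteMeasure μ] :
    (∫ x : ℝ, Complex.exp (-Complex.I * s * x) ∂μ).im = -∫ x, Real.sin (s * x) ∂μ := by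
  refine (integral_im (integrable_exp_neg_I_mul s μ)).symm.trans ?_
  rw [← integral_neg]
  congr 1 with x
  simp [Complex.exp_im, Complex.mul_re, Complex.mul_im]

lemma abs_integral_cos_mul_sub_le (μ ν : Measure ℝ) {s : ℝ} (hs : s ≠ 0) :
    ENNReal.ofReal |(∫ x, Real.cos (s * x) ∂μ) - ∫ x, Real.cos (s * x) ∂ν| ≤
      ENNReal.ofReal |s| * kantorovich2 |s| μ ν :=
  abs_integral_comp_mul_left_sub_le Real.contDiff_cos ⟨1, Real.abs_cos_le_one⟩
    (by simp [Real.deriv_cos', Real.abs_sin_le_one])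
    (by simp [Real.deriv_cos', Real.abs_cos_le_one]) μ ν hs

lemma abs_integral_sin_mul_sub_le (μ ν : Measure ℝ) {s : ℝ} (hs : s ≠ 0) :
    ENNReal.ofReal |(∫ x, Real.sin (s * x) ∂μ) - ∫ x, Real.sin (s * x) ∂ν| ≤
      ENNReal.ofReal |s| * kantorovich2 |s| μ ν :=
  abs_integral_comp_mul_left_sub_le Real.contDiff_sin ⟨1, Real.abs_sin_le_one⟩
    (by simp [Real.deriv_sin, Real.abs_cos_le_one])
    (by simp [Real.deriv_sin, Real.abs_sin_le_one]) μ ν hs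

/-- For probability measures `μ`, `ν` on `ℝ` and `s ∈ ℝ`, the characteristic functions
satisfy `|∫ e^{-isx} dμ - ∫ e^{-isx} dν| ≤ 2|s| ℓ_{1,|s|}(μ, ν)`. -/
theorem stmt7 (μ ν : Measure ℝ) [IsProbabilityMeasure μ] [IsProbabilityMeasure ν] (s : ℝ) :
    ENNReal.ofReal ‖
        ((∫ x : ℝ, Complex.exp (-Complex.I * s * x) ∂μ) -
          ∫ x : ℝ, Complex.exp (-Complex.I * s * x) ∂ν)‖ ≤
      ENNReal.ofReal (2 * |s|) * kantorovich2 |s| μ ν := by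
  rcases eq_or_ne s 0 with rfl | hs
  · simp
  set z := (∫ x : ℝ, Complex.exp (-Complex.I * s * x) ∂μ) -
    ∫ x : ℝ, Complex.exp (-Complex.I * s * x) ∂ν
  have hre : |z.re| = |(∫ x, Real.cos (s * x) ∂μ) - ∫ x, Real.cos (s * x) ∂ν| := by
    rw [Complex.sub_re, re_integral_exp_neg_I_mul, re_integral_exp_neg_I_mul]
  have him : |z.im| = |(∫ x, Real.sin (s * x) ∂μ) - ∫ x, Real.sin (s * x) ∂ν| := by
    rw [Complex.sub_im, im_integral_exp_neg_I_mul, im_integral_exp_neg_I_mul, ← abs_neg]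
    ring_nf
  calc ENNReal.ofReal ‖z‖
      ≤ ENNReal.ofReal |z.re| + ENNReal.ofReal |z.im| := by
        rw [← ENNReal.ofReal_add (abs_nonneg _) (abs_nonneg _)]
        exact ENNReal.ofReal_le_ofReal (Complex.norm_le_abs_re_add_abs_im z)
    _ ≤ ENNReal.ofReal |s| * kantorovich2 |s| μ ν + ENNReal.ofReal |s| * kantorovich2 |s| μ ν := by
        rw [hre, him]
        exact add_le_add (abs_integral_cos_mul_sub_le μ ν hs) (abs_integral_sin_mul_sub_le μ ν hs)
    _ = ENNReal.ofReal (2 * |s|) * kantorovich2 |s| μ ν := by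
        rw [← two_mul, ← mul_assoc, ENNReal.ofReal_mul zero_le_two, ENNReal.ofReal_ofNat]
end

section
/- Let γ > 1 and 0 < c ≤ 2. There exists a constant C such that for every r > 0, ∫_0^∞ e^{−t} t^{−γ} e^{−c r²/t} dt ≤ C r^{2−2γ} e^{−c r/2}. -/
/-!
Completing the square, `t + c r² / (2t) ≥ c r / 2` for `t > 0` as long as `c ≤ 8`, so the factor
`e^{-t} e^{-c r²/(2t)}` of the integrand is at most `e^{-c r/2}`. What remains is
`∫ t^{-γ} e^{-a/t} dt` with `a = c r²/2`, which the substitution `t = 1/y` turns into the Gamma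
integral `a^{1-γ} Γ(γ-1)`; this produces the factor `r^{2-2γ}`.
-/

open MeasureTheory Real Set

/-- The Gamma integrand `y ^ (γ - 2) * e^{-a y}` after the substitution `y = x⁻¹` in the form
of `integral_comp_rpow_Ioi`. -/
lemma abs_neg_one_mul_rpow_smul_inv_eq {γ a x : ℝ} (hx : 0 < x) :
    (|(-1 : ℝ)| * x ^ ((-1 : ℝ) - 1)) •
        ((x ^ (-1 : ℝ)) ^ (γ - 1 - 1) * exp (-(a * x ^ (-1 : ℝ)))) =
      x ^ (-γ) * exp (-(a / x)) := by
  rw [smul_eq_mul, abs_neg, abs_one, one_mul, rpow_neg_one, inv_rpow hx.le, ← rpow_neg hx.le,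
    ← mul_assoc, ← rpow_add hx, div_eq_mul_inv]
  ring_nf

theorem integrableOn_rpow_neg_mul_exp_neg_div {γ a : ℝ} (hγ : 1 < γ) (ha : 0 < a) :
    IntegrableOn (fun t : ℝ => t ^ (-γ) * exp (-(a / t))) (Ioi 0) := by
  have hGamma : IntegrableOn (fun y : ℝ => y ^ (γ - 1 - 1) * exp (-(a * y))) (Ioi 0) := by
    simpa only [rpow_one, neg_mul] using
      integrableOn_rpow_mul_exp_neg_mul_rpow (p := 1) (by linarith) one_pos ha
  exact ((integrableOn_Ioi_comp_rpow_iff _ (by norm_num : (-1 : ℝ) ≠ 0)).mpr hGamma).congr_fun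
    (fun _ hx => abs_neg_one_mul_rpow_smul_inv_eq hx) measurableSet_Ioi

theorem integral_rpow_neg_mul_exp_neg_div {γ a : ℝ} (hγ : 1 < γ) (ha : 0 < a) :
    ∫ t in Ioi 0, t ^ (-γ) * exp (-(a / t)) = a ^ (1 - γ) * Gamma (γ - 1) := by
  have h := integral_comp_rpow_Ioi (fun y : ℝ => y ^ (γ - 1 - 1) * exp (-(a * y)))
    (p := -1) (by norm_num)
  beta_reduce at h
  rw [setIntegral_congr_fun measurableSet_Ioi (fun _ hx => abs_neg_one_mul_rpow_smul_inv_eq hx),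
    integral_rpow_mul_exp_neg_mul_Ioi (by linarith) ha] at h
  rw [h, one_div, inv_rpow ha.le, ← rpow_neg ha.le, neg_sub]

lemma neg_sub_div_le_neg_sub_div {c r t : ℝ} (hc : 0 ≤ c) (hc8 : c ≤ 8) (ht : 0 < t) :
    -t - c * r ^ 2 / t ≤ -(c * r / 2) - c * r ^ 2 / 2 / t := by
  rw [← sub_nonneg, show -(c * r / 2) - c * r ^ 2 / 2 / t - (-t - c * r ^ 2 / t) =
      (2 * t ^ 2 - c * r * t + c * r ^ 2) / (2 * t) by field_simp; ring]
  apply div_nonneg _ (by linarith)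
  -- `16 (2t² - c r t + c r²) = 2 (4t - c r)² + 2 c (8 - c) r²`
  nlinarith [sq_nonneg (4 * t - c * r), mul_nonneg (mul_nonneg hc (by linarith : 0 ≤ 8 - c))
    (sq_nonneg r)]

lemma exp_neg_mul_rpow_mul_exp_le {γ c r t : ℝ} (hc : 0 ≤ c) (hc8 : c ≤ 8) (ht : 0 < t) :
    exp (-t) * t ^ (-γ) * exp (-c * r ^ 2 / t) ≤
      exp (-(c * r / 2)) * (t ^ (-γ) * exp (-(c * r ^ 2 / 2 / t))) := by
  calc exp (-t) * t ^ (-γ) * exp (-c * r ^ 2 / t)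
      = t ^ (-γ) * exp (-t - c * r ^ 2 / t) := by
        rw [sub_eq_add_neg, exp_add, neg_mul, neg_div]; ring
    _ ≤ t ^ (-γ) * exp (-(c * r / 2) - c * r ^ 2 / 2 / t) := by
        gcongr t ^ (-γ) * exp ?_
        exact neg_sub_div_le_neg_sub_div hc hc8 ht
    _ = exp (-(c * r / 2)) * (t ^ (-γ) * exp (-(c * r ^ 2 / 2 / t))) := by
        rw [sub_eq_add_neg, exp_add]; ring

theorem integral_exp_neg_mul_rpow_mul_exp_le {γ c r : ℝ} (hγ : 1 < γ) (hc : 0 < c) (hc8 : c ≤ 8)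
    (hr : 0 < r) :
    ∫ t in Ioi 0, exp (-t) * t ^ (-γ) * exp (-c * r ^ 2 / t) ≤
      (c / 2) ^ (1 - γ) * Gamma (γ - 1) * r ^ (2 - 2 * γ) * exp (-c * r / 2) := by
  have ha : 0 < c * r ^ 2 / 2 := by positivity
  calc ∫ t in Ioi 0, exp (-t) * t ^ (-γ) * exp (-c * r ^ 2 / t)
      ≤ ∫ t in Ioi 0, exp (-(c * r / 2)) * (t ^ (-γ) * exp (-(c * r ^ 2 / 2 / t))) := by
        refine integral_mono_of_nonneg ?_
          ((integrableOn_rpow_neg_mul_exp_neg_div hγ ha).const_mul _) ?_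
        · filter_upwards [self_mem_ae_restrict measurableSet_Ioi] with t (ht : 0 < t)
          positivity
        · filter_upwards [self_mem_ae_restrict measurableSet_Ioi] with t ht
          exact exp_neg_mul_rpow_mul_exp_le hc.le hc8 ht
    _ = exp (-(c * r / 2)) * ((c * r ^ 2 / 2) ^ (1 - γ) * Gamma (γ - 1)) := by
        rw [integral_const_mul, integral_rpow_neg_mul_exp_neg_div hγ ha]
    _ = (c / 2) ^ (1 - γ) * Gamma (γ - 1) * r ^ (2 - 2 * γ) * exp (-c * r / 2) := by
        rw [show c * r ^ 2 / 2 = c / 2 * r ^ 2 by ring, mul_rpow (by positivity) (by positivity), ← rpow_two,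
          ← rpow_mul hr.le, neg_mul, neg_div]
        ring_nf

/-- For `γ > 1` and `0 < c ≤ 2`, there is a constant `C` such that for every `r > 0`,
`∫_0^∞ e^{-t} t^{-γ} e^{-c r²/t} dt ≤ C r^{2-2γ} e^{-c r/2}`. -/
theorem stmt10 (γ c : ℝ) (hγ : 1 < γ) (hc : 0 < c) (hc2 : c ≤ 2) :
    ∃ C : ℝ, ∀ r : ℝ, 0 < r →
      ∫ t in Set.Ioi (0 : ℝ), Real.exp (-t) * t ^ (-γ) * Real.exp (-c * r ^ 2 / t) ≤
        C * r ^ (2 - 2 * γ) * Real.exp (-c * r / 2) :=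
  ⟨(c / 2) ^ (1 - γ) * Gamma (γ - 1), fun _ hr =>
    integral_exp_neg_mul_rpow_mul_exp_le hγ hc (by linarith) hr⟩
end

section
/- Let 0 < γ < 1 and c > 0. There exist constants C and c' > 0 such that for every r ≥ 0, ∫_0^∞ e^{−t} t^{−γ} e^{−c r²/t} dt ≤ C (r^{2−2γ} + 1) e^{−c' r}. -/
open MeasureTheory Real Set

/-!
By AM–GM, `t / 2 + c r² / t ≥ √(2c) r` for `t > 0`, so `e^{-t} e^{-c r²/t} ≤ e^{-√(2c) r} e^{-t/2}`.
Integrating against `t^{-γ}` bounds the integral by `e^{-√(2c) r}` times the finite constant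
`∫_0^∞ t^{-γ} e^{-t/2} dt` (finite because `γ < 1`), and `1 ≤ r^{2-2γ} + 1`.
-/

lemma sqrt_two_mul_mul_le_half_add_div {c t : ℝ} (hc : 0 ≤ c) (ht : 0 < t) (r : ℝ) :
    √(2 * c) * r ≤ t / 2 + c * r ^ 2 / t := by
  have hs : √(2 * c) ^ 2 = 2 * c := sq_sqrt (by linarith)
  rw [div_add_div _ _ two_ne_zero ht.ne', le_div_iff₀ (by positivity)]
  nlinarith [sq_nonneg (t - √(2 * c) * r)]

lemma exp_neg_mul_exp_neg_div_le {c t : ℝ} (hc : 0 ≤ c) (ht : 0 < t) (r : ℝ) :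
    exp (-t) * exp (-c * r ^ 2 / t) ≤ exp (-√(2 * c) * r) * exp (-(1 / 2) * t) := by
  rw [← exp_add, ← exp_add, exp_le_exp]
  have := sqrt_two_mul_mul_le_half_add_div hc ht r
  rw [neg_mul, neg_div]
  linarith

lemma integrableOn_rpow_mul_exp_neg_half {s : ℝ} (hs : -1 < s) :
    IntegrableOn (fun t : ℝ => t ^ s * exp (-(1 / 2) * t)) (Ioi 0) := by
  simpa only [rpow_one] using
    integrableOn_rpow_mul_exp_neg_mul_rpow (p := 1) hs one_pos (by norm_num : (0 : ℝ) < 1 / 2)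

lemma setIntegral_exp_neg_mul_rpow_mul_exp_neg_div_le {γ c : ℝ} (hγ : γ < 1) (hc : 0 ≤ c)
    (r : ℝ) :
    ∫ t in Ioi 0, exp (-t) * t ^ (-γ) * exp (-c * r ^ 2 / t) ≤
      exp (-√(2 * c) * r) * ∫ t in Ioi 0, t ^ (-γ) * exp (-(1 / 2) * t) := by
  rw [← integral_const_mul]
  refine integral_mono_of_nonneg ?_ ((integrableOn_rpow_mul_exp_neg_half (by linarith)).const_mul _)
    (ae_restrict_of_forall_mem measurableSet_Ioi fun t (ht : 0 < t) => ?_)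
  · exact ae_restrict_of_forall_mem measurableSet_Ioi fun t (ht : 0 < t) => by positivity
  · calc exp (-t) * t ^ (-γ) * exp (-c * r ^ 2 / t)
        = t ^ (-γ) * (exp (-t) * exp (-c * r ^ 2 / t)) := by ring
      _ ≤ t ^ (-γ) * (exp (-√(2 * c) * r) * exp (-(1 / 2) * t)) := by
          exact mul_le_mul_of_nonneg_left (exp_neg_mul_exp_neg_div_le hc ht r) (by positivity)
      _ = exp (-√(2 * c) * r) * (t ^ (-γ) * exp (-(1 / 2) * t)) := by ring

theorem stmt12_general (γ c : ℝ) (hγ1 : γ < 1) (hc : 0 < c) :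
    ∃ C c' : ℝ, 0 < c' ∧ ∀ r : ℝ, 0 ≤ r →
      ∫ t in Set.Ioi (0 : ℝ), Real.exp (-t) * t ^ (-γ) * Real.exp (-c * r ^ 2 / t) ≤
        C * (r ^ (2 - 2 * γ) + 1) * Real.exp (-c' * r) := by
  set C := ∫ t in Ioi 0, t ^ (-γ) * exp (-(1 / 2) * t)
  have hC : 0 ≤ C := setIntegral_nonneg measurableSet_Ioi fun t (ht : 0 < t) => by positivity
  refine ⟨C, √(2 * c), by positivity, fun r hr => ?_⟩
  calc _ ≤ exp (-√(2 * c) * r) * C := setIntegral_exp_neg_mul_rpow_mul_exp_neg_div_le hγ1 hc.le r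
    _ = C * 1 * exp (-√(2 * c) * r) := by ring
    _ ≤ C * (r ^ (2 - 2 * γ) + 1) * exp (-√(2 * c) * r) := by
        gcongr
        exact le_add_of_nonneg_left (rpow_nonneg hr _)

/-- For `0 < γ < 1` and `c > 0`, there are constants `C` and `c' > 0` such that for every
`r ≥ 0`, `∫_0^∞ e^{-t} t^{-γ} e^{-c r²/t} dt ≤ C (r^{2-2γ} + 1) e^{-c' r}`. -/
theorem stmt12 (γ c : ℝ) (hγ0 : 0 < γ) (hγ1 : γ < 1) (hc : 0 < c) :
    ∃ C c' : ℝ, 0 < c' ∧ ∀ r : ℝ, 0 ≤ r →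
      ∫ t in Set.Ioi (0 : ℝ), Real.exp (-t) * t ^ (-γ) * Real.exp (-c * r ^ 2 / t) ≤
        C * (r ^ (2 - 2 * γ) + 1) * Real.exp (-c' * r) :=
  stmt12_general γ c hγ1 hc
end
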